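/- Let θ = (x, y, w, z), θ̄ = (0,0,1,1), g(θ) = (xy, xw, yz)ᵀ, G(θ) = ∂g/∂θᵀ, and for a 4×4 symmetric positive definite matrix U define the polynomial h_U(x,y,w,z) = det[G(θ̄ + (x,y,w,z)) U G(θ̄ + (x,y,w,z))ᵀ]. Then: (i) for U = I_4, h_I = w²x²y² + 2wx²y² + x⁴y² + x²y⁴ + x²y²z² + 2x²y²z + 2x²y², whose lowest-degree nonzero homogeneous component is 2x²y² of degree 4, so m_3(I) = 4 = m_3; and (ii) for U with rows (1, √0.98, 0, 0), (√0.98, 1, 0.1, 0.1), (0, 0.1, 1, 0), (0, 0.1, 0, 1), every homogeneous component of h_U of degree at most 5 vanishes and the degree-6 component is nonzero, so m_3(U) = 6 > m_3 = 4. -/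

import Mathlib

open MeasureTheory Filter Topology Matrix

noncomputable section

/-- Evaluate a matrix of multivariate real polynomials at a point `x ∈ ℝ^p`. -/
def evalMat {q p : ℕ} (G : Matrix (Fin q) (Fin p) (MvPolynomial (Fin p) ℝ)) (x : Fin p → ℝ) :
    Matrix (Fin q) (Fin p) ℝ :=
  Matrix.of fun i j => MvPolynomial.eval x (G i j)

/-- A matrix over a commutative ring has rank at least `k` if it has a `k × k` submatrix whose
determinant is nonzero (for polynomial matrices: a not-identically-zero polynomial). -/
def rankGe {m n R : Type*} [Fintype m] [Fintype n] [CommRing R]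
    (G : Matrix m n R) (k : ℕ) : Prop :=
  ∃ (r : Fin k → m) (c : Fin k → n), Function.Injective r ∧ Function.Injective c ∧
    (G.submatrix r c).det ≠ 0

/-- `r` is the rank of the matrix `G` over a commutative ring: the largest dimension of a
square submatrix with nonzero determinant. -/
def IsPolyRank {m n R : Type*} [Fintype m] [Fintype n] [CommRing R]
    (G : Matrix m n R) (r : ℕ) : Prop :=
  rankGe G r ∧ ¬ rankGe G (r + 1)

/-- The lowest degree of a nonzero homogeneous component of a multivariate polynomial. -/
def lowDeg {p : ℕ} (h : MvPolynomial (Fin p) ℝ) : ℕ :=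
  sInf {d | MvPolynomial.homogeneousComponent d h ≠ 0}

/-- The minimal degree of a nonzero monomial among the entries of row `l` of `G`. -/
def rowDeg {q p : ℕ} (G : Matrix (Fin q) (Fin p) (MvPolynomial (Fin p) ℝ)) (l : Fin q) : ℕ :=
  sInf {d | ∃ j, MvPolynomial.homogeneousComponent d (G l j) ≠ 0}

/-- `Ḡ`: the lowest-degree row matrix of `G`; row `l` consists of the homogeneous components of
degree `rowDeg G l` of the entries of row `l` of `G`. -/
def lowMat {q p : ℕ} (G : Matrix (Fin q) (Fin p) (MvPolynomial (Fin p) ℝ)) :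
    Matrix (Fin q) (Fin p) (MvPolynomial (Fin p) ℝ) :=
  Matrix.of fun l j => MvPolynomial.homogeneousComponent (rowDeg G l) (G l j)

/-- Echelon form: the row degrees are nondecreasing (rows are stacked in blocks of equal degree
with strictly increasing degrees) and the rows of `Ḡ` are linearly independent as vectors of
polynomial functions. -/
def IsEchelon {q p : ℕ} (G : Matrix (Fin q) (Fin p) (MvPolynomial (Fin p) ℝ)) : Prop :=
  Monotone (rowDeg G) ∧ LinearIndependent ℝ (fun l : Fin q => lowMat G l)

/-- The echelon scaling matrix `Δ_T = diag[T^{s̄_l/2}]`. -/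
def scaleMat {q : ℕ} (s : Fin q → ℕ) (T : ℝ) : Matrix (Fin q) (Fin q) ℝ :=
  Matrix.diagonal fun l => T ^ ((s l : ℝ) / 2)

/-- The scaled matrix `M_T(y,U) = Δ_T G(T^{-1/2} y) U G(T^{-1/2} y)ᵀ Δ_T`. -/
def MT {q p : ℕ} (G : Matrix (Fin q) (Fin p) (MvPolynomial (Fin p) ℝ))
    (U : Matrix (Fin p) (Fin p) ℝ) (T : ℝ) (y : Fin p → ℝ) : Matrix (Fin q) (Fin q) ℝ :=
  scaleMat (rowDeg G) T * evalMat G (fun i => T ^ (-(1 : ℝ) / 2) * y i) * U *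
    (evalMat G (fun i => T ^ (-(1 : ℝ) / 2) * y i))ᵀ * scaleMat (rowDeg G) T

/-- `Ḡ(y) U Ḡ(y)ᵀ`. -/
def Bbar {q p : ℕ} (G : Matrix (Fin q) (Fin p) (MvPolynomial (Fin p) ℝ))
    (U : Matrix (Fin p) (Fin p) ℝ) (y : Fin p → ℝ) : Matrix (Fin q) (Fin q) ℝ :=
  evalMat (lowMat G) y * U * (evalMat (lowMat G) y)ᵀ

/-- `lam` is the vector of eigenvalues of `M` arranged in decreasing order:
it is antitone and enumerates the roots of the characteristic polynomial with multiplicity. -/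
def IsOrderedEigs {q : ℕ} (M : Matrix (Fin q) (Fin q) ℝ) (lam : Fin q → ℝ) : Prop :=
  Antitone lam ∧ M.charpoly = ∏ i, (Polynomial.X - Polynomial.C (lam i))

/-- The `k`-th elementary symmetric polynomial of `λ_1, …, λ_q`. -/
def esymmVal {q : ℕ} (k : ℕ) (lam : Fin q → ℝ) : ℝ :=
  ∑ S ∈ Finset.powersetCard k (Finset.univ : Finset (Fin q)), ∏ i ∈ S, lam i

/-- `B(x,U) = G(x) U G(x)ᵀ` as a matrix of polynomials in `x`. -/
def BPoly {q p : ℕ} (G : Matrix (Fin q) (Fin p) (MvPolynomial (Fin p) ℝ))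
    (U : Matrix (Fin p) (Fin p) ℝ) : Matrix (Fin q) (Fin q) (MvPolynomial (Fin p) ℝ) :=
  (G * U.map (MvPolynomial.C : ℝ → MvPolynomial (Fin p) ℝ) :
    Matrix (Fin q) (Fin p) (MvPolynomial (Fin p) ℝ)) * Gᵀ

/-- The coefficient `a_k(x,U)` of `λ^{q-k}` in the characteristic polynomial of `B(x,U)`,
as a polynomial in `x`. -/
def acoeff {q p : ℕ} (G : Matrix (Fin q) (Fin p) (MvPolynomial (Fin p) ℝ))
    (U : Matrix (Fin p) (Fin p) ℝ) (k : ℕ) : MvPolynomial (Fin p) ℝ :=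
  (BPoly G U).charpoly.coeff (q - k)

/-- `m_k(U)`: the lowest degree of a nonzero homogeneous-in-`x` component of `a_k(x,U)`. -/
def mkU {q p : ℕ} (G : Matrix (Fin q) (Fin p) (MvPolynomial (Fin p) ℝ))
    (U : Matrix (Fin p) (Fin p) ℝ) (k : ℕ) : ℕ :=
  lowDeg (acoeff G U k)

/-- `m_k = min_{Q ∈ F_p} m_k(Q)`. -/
def mkmin {q p : ℕ} (G : Matrix (Fin q) (Fin p) (MvPolynomial (Fin p) ℝ)) (k : ℕ) : ℕ :=
  sInf ((fun U => mkU G U k) '' {U : Matrix (Fin p) (Fin p) ℝ | U.IsSymm ∧ U.PosDef})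

/-- The symmetric matrix built from the upper-triangular entries of `u`. -/
def symOfUpper {p : ℕ} (u : Fin p → Fin p → ℝ) : Matrix (Fin p) (Fin p) ℝ :=
  Matrix.of fun i j => if i ≤ j then u i j else u j i

/-- Principal minor of `M` with rows and columns in `S` retained. -/
def pminor {q : ℕ} {R : Type*} [CommRing R] (M : Matrix (Fin q) (Fin q) R)
    (S : Finset (Fin q)) : R :=
  (M.submatrix (fun i : {a // a ∈ S} => (i : Fin q)) (fun i : {a // a ∈ S} => (i : Fin q))).det

/-- The Jacobian matrix `∂g/∂θᵀ` of a vector of polynomials. -/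
def jacMat {q p : ℕ} (g : Fin q → MvPolynomial (Fin p) ℝ) :
    Matrix (Fin q) (Fin p) (MvPolynomial (Fin p) ℝ) :=
  Matrix.of fun l j => MvPolynomial.pderiv j (g l)

/-- The polynomial `f(θ̄ + ·)`. -/
def shiftPoly {p : ℕ} (θbar : Fin p → ℝ) (f : MvPolynomial (Fin p) ℝ) : MvPolynomial (Fin p) ℝ :=
  MvPolynomial.bind₁ (fun i => MvPolynomial.X i + MvPolynomial.C (θbar i)) f

/-- Convergence in distribution of `E`-valued random elements to the law `μ`:
weak convergence tested against bounded continuous functions. -/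
def TendstoInDist {Ω E : Type*} [MeasurableSpace Ω] [TopologicalSpace E] [MeasurableSpace E]
    (P : Measure Ω) (X : ℕ → Ω → E) (μ : Measure E) : Prop :=
  ∀ f : BoundedContinuousFunction E ℝ,
    Tendsto (fun T => ∫ ω, f (X T ω) ∂P) atTop (𝓝 (∫ x, f x ∂μ))

/-- `μ` is the centered Gaussian law `N(0,V)` on `ℝ^p`: a probability measure all of whose
one-dimensional linear marginals are centered Gaussian with the prescribed variance. -/
def IsGaussianLaw {p : ℕ} (μ : Measure (Fin p → ℝ)) (V : Matrix (Fin p) (Fin p) ℝ) : Prop :=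
  IsProbabilityMeasure μ ∧
    ∀ a : Fin p → ℝ,
      μ.map (fun x => ∑ i, a i * x i) =
        ProbabilityTheory.gaussianReal 0 (Real.toNNReal (∑ i, ∑ j, a i * V i j * a j))

/-- Convergence in probability to a constant. -/
def TendstoInProbConst {Ω E : Type*} [MeasurableSpace Ω] [PseudoMetricSpace E]
    (P : Measure Ω) (X : ℕ → Ω → E) (c : E) : Prop :=
  ∀ ε : ℝ, 0 < ε → Tendsto (fun T => P {ω | ε ≤ dist (X T ω) c}) atTop (𝓝 0)

/-- Divergence to `+∞` in probability. -/
def TendstoInProbAtTop {Ω : Type*} [MeasurableSpace Ω]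
    (P : Measure Ω) (X : ℕ → Ω → ℝ) : Prop :=
  ∀ C : ℝ, Tendsto (fun T => P {ω | X T ω ≤ C}) atTop (𝓝 0)

/-- Boundedness in probability (`O_p(1)`). -/
def BoundedInProb {Ω : Type*} [MeasurableSpace Ω]
    (P : Measure Ω) (X : ℕ → Ω → ℝ) : Prop :=
  ∀ ε : ℝ, 0 < ε → ∃ C : ℝ, ∀ᶠ T in atTop, P {ω | C ≤ |X T ω|} ≤ ENNReal.ofReal ε

end


namespace S14
open Matrix MvPolynomial

noncomputable def Gm : Matrix (Fin 3) (Fin 4) (MvPolynomial (Fin 4) ℝ) :=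
  !![X 1, X 0, 0, 0; X 2 + 1, 0, X 0, 0; 0, X 3 + 1, 0, X 1]

noncomputable def Qp : MvPolynomial (Fin 4) ℝ :=
  C (Real.sqrt 0.98) * X 0 ^ 2 * X 1 + X 0 * X 1 ^ 2 + C (0.1 : ℝ) * (X 0 * X 1 * (X 3 - X 2))

lemma jac_eq :
    jacMat (fun l => shiftPoly ![(0:ℝ),0,1,1]
      (![MvPolynomial.X 0 * MvPolynomial.X 1, MvPolynomial.X 0 * MvPolynomial.X 2,
        MvPolynomial.X 1 * MvPolynomial.X 3] l)) = Gm := by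
  ext i j
  fin_cases i <;> fin_cases j <;>
    simp [jacMat, shiftPoly, pderiv_mul, Gm]

lemma hc_of_hom {n m : ℕ} {p : MvPolynomial (Fin 4) ℝ} (h : p.IsHomogeneous n) :
    homogeneousComponent m p = if m = n then p else 0 :=
  homogeneousComponent_of_mem ((mem_homogeneousSubmodule _ _).mpr h)

lemma hom_mul {p q : MvPolynomial (Fin 4) ℝ} {m n k : ℕ} (hp : p.IsHomogeneous m)
    (hq : q.IsHomogeneous n) (h : m + n = k) : (p * q).IsHomogeneous k := h ▸ hp.mul hq

lemma hom_Xp {i : Fin 4} {e : ℕ} : ((X i : MvPolynomial (Fin 4) ℝ) ^ e).IsHomogeneous e := by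
  simpa using (isHomogeneous_X ℝ i).pow e

lemma hom_X {i : Fin 4} : (X i : MvPolynomial (Fin 4) ℝ).IsHomogeneous 1 := isHomogeneous_X ℝ i

lemma hom_two : (2 : MvPolynomial (Fin 4) ℝ).IsHomogeneous 0 := by
  have h := isHomogeneous_C (Fin 4) (2 : ℝ)
  rwa [map_ofNat] at h

lemma homt1 : (X 2 ^ 2 * X 0 ^ 2 * X 1 ^ 2 : MvPolynomial (Fin 4) ℝ).IsHomogeneous 6 :=
  hom_mul (hom_mul hom_Xp hom_Xp rfl) hom_Xp rfl
lemma homt2 : (2 * X 2 * X 0 ^ 2 * X 1 ^ 2 : MvPolynomial (Fin 4) ℝ).IsHomogeneous 5 :=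
  hom_mul (hom_mul (hom_mul hom_two hom_X rfl) hom_Xp rfl) hom_Xp rfl
lemma homt3 : (X 0 ^ 4 * X 1 ^ 2 : MvPolynomial (Fin 4) ℝ).IsHomogeneous 6 :=
  hom_mul hom_Xp hom_Xp rfl
lemma homt4 : (X 0 ^ 2 * X 1 ^ 4 : MvPolynomial (Fin 4) ℝ).IsHomogeneous 6 :=
  hom_mul hom_Xp hom_Xp rfl
lemma homt5 : (X 0 ^ 2 * X 1 ^ 2 * X 3 ^ 2 : MvPolynomial (Fin 4) ℝ).IsHomogeneous 6 :=
  hom_mul (hom_mul hom_Xp hom_Xp rfl) hom_Xp rfl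
lemma homt6 : (2 * X 0 ^ 2 * X 1 ^ 2 * X 3 : MvPolynomial (Fin 4) ℝ).IsHomogeneous 5 :=
  hom_mul (hom_mul (hom_mul hom_two hom_Xp rfl) hom_Xp rfl) hom_X rfl
lemma homt7 : (2 * X 0 ^ 2 * X 1 ^ 2 : MvPolynomial (Fin 4) ℝ).IsHomogeneous 4 :=
  hom_mul (hom_mul hom_two hom_Xp rfl) hom_Xp rfl

lemma homQp : Qp.IsHomogeneous 3 := by
  apply MvPolynomial.IsHomogeneous.add
  apply MvPolynomial.IsHomogeneous.add
  · exact hom_mul (hom_mul (isHomogeneous_C _ _) hom_Xp rfl) hom_X rfl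
  · exact hom_mul hom_X hom_Xp rfl
  · refine hom_mul (isHomogeneous_C _ _) (hom_mul (hom_mul hom_X hom_X rfl) (hom_X.sub hom_X) rfl) rfl

lemma homQp2 : (Qp ^ 2).IsHomogeneous 6 := by simpa using homQp.pow 2

lemma Qp_ne : Qp ≠ 0 := by
  intro h
  have h2 := congrArg (eval ![(1:ℝ),1,0,0]) h
  simp [Qp] at h2
  nlinarith [Real.sqrt_nonneg (0.98 : ℝ), h2]

lemma two_sq_ne : (2 * X 0 ^ 2 * X 1 ^ 2 : MvPolynomial (Fin 4) ℝ) ≠ 0 := by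
  intro h
  have h2 := congrArg (eval ![(1:ℝ),1,0,0]) h
  simp at h2

lemma detI_eq :
    (BPoly Gm (1 : Matrix (Fin 4) (Fin 4) ℝ)).det =
      X 2 ^ 2 * X 0 ^ 2 * X 1 ^ 2 + 2 * X 2 * X 0 ^ 2 * X 1 ^ 2 + X 0 ^ 4 * X 1 ^ 2 +
        X 0 ^ 2 * X 1 ^ 4 + X 0 ^ 2 * X 1 ^ 2 * X 3 ^ 2 + 2 * X 0 ^ 2 * X 1 ^ 2 * X 3 +
        2 * X 0 ^ 2 * X 1 ^ 2 := by
  rw [BPoly, show ((1 : Matrix (Fin 4) (Fin 4) ℝ).map MvPolynomial.C) = 1 from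
    Matrix.map_one _ (map_zero _) (map_one _)]
  rw [Matrix.det_fin_three]
  simp only [Gm, Matrix.mul_apply, Matrix.mul_one, Matrix.transpose_apply, Fin.sum_univ_four,
    Matrix.cons_val', Matrix.cons_val_zero, Matrix.cons_val_one, Matrix.head_cons,
    Matrix.empty_val', Matrix.cons_val_fin_one, Matrix.head_fin_const, Matrix.cons_val_two,
    Matrix.cons_val_three, Matrix.tail_cons, Matrix.of_apply]
  ring

set_option maxHeartbeats 1000000 in
lemma detU_eq :
    (BPoly Gm
      !![1, Real.sqrt 0.98, 0, 0;
         Real.sqrt 0.98, 1, 0.1, 0.1;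
         0, 0.1, 1, 0;
         0, 0.1, 0, 1]).det = Qp ^ 2 := by
  have h0 : (1 : MvPolynomial (Fin 4) ℝ) - C (Real.sqrt 0.98) ^ 2 - 2 * C (0.1 : ℝ) ^ 2 = 0 := by
    rw [← map_pow, ← map_pow, Real.sq_sqrt (by norm_num : (0.98:ℝ) ≥ 0)]
    rw [show ((0.1:ℝ))^2 = 0.01 by norm_num]
    rw [show (1 : MvPolynomial (Fin 4) ℝ) = C 1 from (_root_.map_one C).symm,
      ← map_ofNat (C : ℝ →+* MvPolynomial (Fin 4) ℝ) 2]
    rw [← _root_.map_mul, ← map_sub, ← map_sub]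
    norm_num
  rw [BPoly, Matrix.det_fin_three, Qp]
  simp only [Gm, Matrix.mul_apply, Matrix.map_apply, Matrix.transpose_apply, Fin.sum_univ_four,
    Matrix.cons_val', Matrix.cons_val_zero, Matrix.cons_val_one, Matrix.head_cons,
    Matrix.empty_val', Matrix.cons_val_fin_one, Matrix.head_fin_const, Matrix.cons_val_two,
    Matrix.cons_val_three, Matrix.tail_cons, Matrix.of_apply, _root_.map_zero, _root_.map_one]
  linear_combination (X 0^2 * X 1^2 * (X 3^2 + 2*X 3 + 2 + X 2^2 + 2*X 2) + X 0^4 * X 1^2) * h0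

set_option maxHeartbeats 1000000 in
lemma cb {A : Type*} [CommRing A] (x y w z q00 q01 q02 q03 q10 q11 q12 q13 q20 q21 q22 q23 q30 q31 q32 q33 : A) :
    (!![q00 * y * y + q01 * y * x + q10 * x * y + q11 * x * x, q00 * y * (w + 1) + q02 * y * x + q10 * x * (w + 1) + q12 * x * x, q01 * y * (z + 1) + q03 * y * y + q11 * x * (z + 1) + q13 * x * y;
         q00 * (w + 1) * y + q01 * (w + 1) * x + q20 * x * y + q21 * x * x, q00 * (w + 1) * (w + 1) + q02 * (w + 1) * x + q20 * x * (w + 1) + q22 * x * x, q01 * (w + 1) * (z + 1) + q03 * (w + 1) * y + q21 * x * (z + 1) + q23 * x * y;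
         q10 * (z + 1) * y + q11 * (z + 1) * x + q30 * y * y + q31 * y * x, q10 * (z + 1) * (w + 1) + q12 * (z + 1) * x + q30 * y * (w + 1) + q32 * y * x, q11 * (z + 1) * (z + 1) + q13 * (z + 1) * y + q31 * y * (z + 1) + q33 * y * y] : Matrix (Fin 3) (Fin 3) A).det = x ^ 2 * y ^ 2 * ((-(z + 1)) * (-(z + 1)) * (q00 * q11 * q22 + q01 * q12 * q20 + q02 * q10 * q21 - q00 * q12 * q21 - q01 * q10 * q22 - q02 * q11 * q20) +
        (-(z + 1)) * (-(w + 1)) * (q00 * q11 * q23 + q01 * q13 * q20 + q03 * q10 * q21 - q00 * q13 * q21 - q01 * q10 * q23 - q03 * q11 * q20) +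
        (-(z + 1)) * y * (q00 * q12 * q23 + q02 * q13 * q20 + q03 * q10 * q22 - q00 * q13 * q22 - q02 * q10 * q23 - q03 * q12 * q20) +
        (-(z + 1)) * x * (q01 * q12 * q23 + q02 * q13 * q21 + q03 * q11 * q22 - q01 * q13 * q22 - q02 * q11 * q23 - q03 * q12 * q21) +
        (-(w + 1)) * (-(z + 1)) * (q00 * q11 * q32 + q01 * q12 * q30 + q02 * q10 * q31 - q00 * q12 * q31 - q01 * q10 * q32 - q02 * q11 * q30) +
        (-(w + 1)) * (-(w + 1)) * (q00 * q11 * q33 + q01 * q13 * q30 + q03 * q10 * q31 - q00 * q13 * q31 - q01 * q10 * q33 - q03 * q11 * q30) +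
        (-(w + 1)) * y * (q00 * q12 * q33 + q02 * q13 * q30 + q03 * q10 * q32 - q00 * q13 * q32 - q02 * q10 * q33 - q03 * q12 * q30) +
        (-(w + 1)) * x * (q01 * q12 * q33 + q02 * q13 * q31 + q03 * q11 * q32 - q01 * q13 * q32 - q02 * q11 * q33 - q03 * q12 * q31) +
        y * (-(z + 1)) * (q00 * q21 * q32 + q01 * q22 * q30 + q02 * q20 * q31 - q00 * q22 * q31 - q01 * q20 * q32 - q02 * q21 * q30) +
        y * (-(w + 1)) * (q00 * q21 * q33 + q01 * q23 * q30 + q03 * q20 * q31 - q00 * q23 * q31 - q01 * q20 * q33 - q03 * q21 * q30) +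
        y * y * (q00 * q22 * q33 + q02 * q23 * q30 + q03 * q20 * q32 - q00 * q23 * q32 - q02 * q20 * q33 - q03 * q22 * q30) +
        y * x * (q01 * q22 * q33 + q02 * q23 * q31 + q03 * q21 * q32 - q01 * q23 * q32 - q02 * q21 * q33 - q03 * q22 * q31) +
        x * (-(z + 1)) * (q10 * q21 * q32 + q11 * q22 * q30 + q12 * q20 * q31 - q10 * q22 * q31 - q11 * q20 * q32 - q12 * q21 * q30) +
        x * (-(w + 1)) * (q10 * q21 * q33 + q11 * q23 * q30 + q13 * q20 * q31 - q10 * q23 * q31 - q11 * q20 * q33 - q13 * q21 * q30) +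
        x * y * (q10 * q22 * q33 + q12 * q23 * q30 + q13 * q20 * q32 - q10 * q23 * q32 - q12 * q20 * q33 - q13 * q22 * q30) +
        x * x * (q11 * q22 * q33 + q12 * q23 * q31 + q13 * q21 * q32 - q11 * q23 * q32 - q12 * q21 * q33 - q13 * q22 * q31)) := by
  rw [Matrix.det_fin_three]
  simp only [Matrix.cons_val', Matrix.cons_val_zero, Matrix.cons_val_one, Matrix.head_cons,
    Matrix.empty_val', Matrix.cons_val_fin_one, Matrix.head_fin_const, Matrix.cons_val_two,
    Matrix.tail_cons, Matrix.of_apply]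
  ring

set_option maxHeartbeats 1000000 in
lemma fact (Q : Matrix (Fin 4) (Fin 4) ℝ) :
    ∃ R, (BPoly Gm Q).det = X 0 ^ 2 * X 1 ^ 2 * R := by
  have hB : BPoly Gm Q =
      !![C (Q 0 0) * X 1 * X 1 + C (Q 0 1) * X 1 * X 0 + C (Q 1 0) * X 0 * X 1 + C (Q 1 1) * X 0 * X 0, C (Q 0 0) * X 1 * (X 2 + 1) + C (Q 0 2) * X 1 * X 0 + C (Q 1 0) * X 0 * (X 2 + 1) + C (Q 1 2) * X 0 * X 0, C (Q 0 1) * X 1 * (X 3 + 1) + C (Q 0 3) * X 1 * X 1 + C (Q 1 1) * X 0 * (X 3 + 1) + C (Q 1 3) * X 0 * X 1;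
           C (Q 0 0) * (X 2 + 1) * X 1 + C (Q 0 1) * (X 2 + 1) * X 0 + C (Q 2 0) * X 0 * X 1 + C (Q 2 1) * X 0 * X 0, C (Q 0 0) * (X 2 + 1) * (X 2 + 1) + C (Q 0 2) * (X 2 + 1) * X 0 + C (Q 2 0) * X 0 * (X 2 + 1) + C (Q 2 2) * X 0 * X 0, C (Q 0 1) * (X 2 + 1) * (X 3 + 1) + C (Q 0 3) * (X 2 + 1) * X 1 + C (Q 2 1) * X 0 * (X 3 + 1) + C (Q 2 3) * X 0 * X 1;
           C (Q 1 0) * (X 3 + 1) * X 1 + C (Q 1 1) * (X 3 + 1) * X 0 + C (Q 3 0) * X 1 * X 1 + C (Q 3 1) * X 1 * X 0, C (Q 1 0) * (X 3 + 1) * (X 2 + 1) + C (Q 1 2) * (X 3 + 1) * X 0 + C (Q 3 0) * X 1 * (X 2 + 1) + C (Q 3 2) * X 1 * X 0, C (Q 1 1) * (X 3 + 1) * (X 3 + 1) + C (Q 1 3) * (X 3 + 1) * X 1 + C (Q 3 1) * X 1 * (X 3 + 1) + C (Q 3 3) * X 1 * X 1] := by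
    rw [show Gm = !![X 1, X 0, 0, 0; X 2 + 1, 0, X 0, 0; 0, X 3 + 1, 0, X 1] from rfl]
    rw [← Matrix.ext_iff]
    intro i j
    fin_cases i <;> fin_cases j <;>
      (simp [BPoly, Matrix.mul_apply, Matrix.vecMul, dotProduct, Matrix.map_apply,
        Fin.sum_univ_four, Matrix.vecHead, Matrix.vecTail, Matrix.transpose_apply]; ring)
  rw [hB]
  exact ⟨_, cb (X 0) (X 1) (X 2) (X 3) (C (Q 0 0)) (C (Q 0 1)) (C (Q 0 2)) (C (Q 0 3))
    (C (Q 1 0)) (C (Q 1 1)) (C (Q 1 2)) (C (Q 1 3)) (C (Q 2 0)) (C (Q 2 1)) (C (Q 2 2))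
    (C (Q 2 3)) (C (Q 3 0)) (C (Q 3 1)) (C (Q 3 2)) (C (Q 3 3))⟩

lemma low4 (R : MvPolynomial (Fin 4) ℝ) {d : ℕ} (hd : d < 4) :
    homogeneousComponent d (X 0 ^ 2 * X 1 ^ 2 * R) = 0 := by
  conv_lhs => rw [← sum_homogeneousComponent R]
  rw [Finset.mul_sum, map_sum]
  apply Finset.sum_eq_zero
  intro i _
  have h : ((X 0 : MvPolynomial (Fin 4) ℝ) ^ 2 * X 1 ^ 2 * homogeneousComponent i R).IsHomogeneous
      (4 + i) :=
    hom_mul (hom_mul hom_Xp hom_Xp rfl)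
      ((mem_homogeneousSubmodule _ _).mp (homogeneousComponent_mem i R)) rfl
  rw [hc_of_hom h, if_neg (by omega)]

lemma acoeff_eq (Q : Matrix (Fin 4) (Fin 4) ℝ) :
    acoeff Gm Q 3 = -(BPoly Gm Q).det := by
  have h := Matrix.det_eq_sign_charpoly_coeff (BPoly Gm Q)
  rw [Fintype.card_fin] at h
  show (BPoly Gm Q).charpoly.coeff (3 - 3) = _
  norm_num at h ⊢
  linear_combination h

lemma sInf_eq_of {S : Set ℕ} {k : ℕ} (hk : k ∈ S) (hall : ∀ d ∈ S, k ≤ d) : sInf S = k :=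
  le_antisymm (Nat.sInf_le hk) (hall _ (Nat.sInf_mem ⟨k, hk⟩))

lemma detBne (Q : Matrix (Fin 4) (Fin 4) ℝ) (hs : Q.IsSymm) (hpd : Q.PosDef) :
    (BPoly Gm Q).det ≠ 0 := by
  set A : Matrix (Fin 3) (Fin 4) ℝ := !![1,1,0,0; 1,0,1,0; 0,1,0,1] with hA
  have hmapG : Gm.map (eval ![(1:ℝ),1,0,0]) = A := by
    ext i j
    fin_cases i <;> fin_cases j <;> simp [Gm, hA]
  have hmapQ : (Q.map MvPolynomial.C).map (eval ![(1:ℝ),1,0,0]) = Q := by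
    ext i j; simp
  have hmap : (BPoly Gm Q).map (eval ![(1:ℝ),1,0,0]) = A * Q * Aᵀ := by
    rw [BPoly, Matrix.map_mul, Matrix.map_mul, hmapG, hmapQ, Matrix.transpose_map, hmapG]
  have hker : ∀ x : Fin 3 → ℝ, x ≠ 0 → Aᵀ *ᵥ x ≠ 0 := by
    intro x hx h0
    apply hx
    have e0 := congrFun h0 0
    have e2 := congrFun h0 2
    have e3 := congrFun h0 3
    simp [hA, Matrix.mulVec, dotProduct, Fin.sum_univ_three] at e0 e2 e3
    funext i
    fin_cases i <;> simp <;> linarith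
  have hpd2 : (A * Q * Aᵀ).PosDef := by
    have h1 : (A * Q * Aᵀ)ᵀ = A * Q * Aᵀ := by
      rw [Matrix.transpose_mul, Matrix.transpose_mul, Matrix.transpose_transpose, hs.eq,
        Matrix.mul_assoc]
    refine Matrix.PosDef.of_dotProduct_mulVec_pos ?_ ?_
    · show (A * Q * Aᵀ)ᴴ = _
      ext i j
      rw [Matrix.conjTranspose_apply, star_trivial]
      exact congrFun (congrFun h1 i) j
    · intro x hx
      have hst : star x = x := funext fun i => star_trivial _
      rw [hst]
      have h2 : (A * Q * Aᵀ) *ᵥ x = A *ᵥ (Q *ᵥ (Aᵀ *ᵥ x)) := by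
        rw [Matrix.mulVec_mulVec, Matrix.mulVec_mulVec]
      rw [h2, dotProduct_mulVec, ← Matrix.mulVec_transpose]
      have h3 := hpd.dotProduct_mulVec_pos (hker x hx)
      rwa [show star (Aᵀ *ᵥ x) = Aᵀ *ᵥ x from funext fun i => star_trivial _] at h3
  intro h
  have h4 : eval ![(1:ℝ),1,0,0] (BPoly Gm Q).det = 0 := by rw [h]; simp
  rw [RingHom.map_det, RingHom.mapMatrix_apply, hmap] at h4
  exact absurd h4 (ne_of_gt hpd2.det_pos)

lemma mkU_one : mkU Gm (1 : Matrix (Fin 4) (Fin 4) ℝ) 3 = 4 := by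
  show sInf {d | homogeneousComponent d (acoeff Gm 1 3) ≠ 0} = 4
  apply sInf_eq_of
  · show homogeneousComponent 4 (acoeff Gm 1 3) ≠ 0
    rw [acoeff_eq, map_neg, detI_eq]
    simp only [map_add, hc_of_hom homt1, hc_of_hom homt2, hc_of_hom homt3, hc_of_hom homt4,
      hc_of_hom homt5, hc_of_hom homt6, hc_of_hom homt7]
    norm_num
  · intro d hd
    by_contra h4
    push_neg at h4
    apply hd
    rw [acoeff_eq, map_neg, detI_eq]
    interval_cases d <;>
      (simp only [map_add, hc_of_hom homt1, hc_of_hom homt2, hc_of_hom homt3, hc_of_hom homt4,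
        hc_of_hom homt5, hc_of_hom homt6, hc_of_hom homt7] <;> norm_num)

lemma mkU_U : mkU Gm
    !![1, Real.sqrt 0.98, 0, 0;
       Real.sqrt 0.98, 1, 0.1, 0.1;
       0, 0.1, 1, 0;
       0, 0.1, 0, 1] 3 = 6 := by
  show sInf {d | homogeneousComponent d (acoeff Gm _ 3) ≠ 0} = 6
  apply sInf_eq_of
  · show homogeneousComponent 6 (acoeff Gm _ 3) ≠ 0
    rw [acoeff_eq, map_neg, detU_eq, hc_of_hom homQp2, if_pos rfl, neg_ne_zero]
    exact pow_ne_zero 2 Qp_ne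
  · intro d hd
    by_contra h6
    push_neg at h6
    apply hd
    rw [acoeff_eq, map_neg, detU_eq, hc_of_hom homQp2, if_neg (by omega), neg_zero]

end S14

/-- Example 3. For `θ = (x,y,w,z)` (indexed `x = u 0`, `y = u 1`, `w = u 2`,
`z = u 3`), `θ̄ = (0,0,1,1)`, `g(θ) = (xy, xw, yz)ᵀ`, `G = ∂g/∂θᵀ` and
`h_U = det[G(θ̄+u) U G(θ̄+u)ᵀ]`: (i) for `U = I₄`, `h_I` is the stated explicit polynomial whose
lowest-degree nonzero homogeneous component is `2x²y²` of degree `4`, so `m₃(I) = 4 = m₃`; and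
(ii) for the stated `U`, all homogeneous components of `h_U` of degree `≤ 5` vanish while the
degree-`6` component does not, so `m₃(U) = 6 > m₃ = 4`. -/
theorem statement_14
    (g : Fin 3 → MvPolynomial (Fin 4) ℝ)
    (hgdef : g = ![MvPolynomial.X 0 * MvPolynomial.X 1, MvPolynomial.X 0 * MvPolynomial.X 2,
      MvPolynomial.X 1 * MvPolynomial.X 3])
    (θbar : Fin 4 → ℝ) (hθbar : θbar = ![0, 0, 1, 1])
    (Gs : Matrix (Fin 3) (Fin 4) (MvPolynomial (Fin 4) ℝ))
    (hGs : Gs = jacMat (fun l => shiftPoly θbar (g l)))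
    (U : Matrix (Fin 4) (Fin 4) ℝ)
    (hUdef : U = !![1, Real.sqrt 0.98, 0, 0;
                    Real.sqrt 0.98, 1, 0.1, 0.1;
                    0, 0.1, 1, 0;
                    0, 0.1, 0, 1]) :
    -- (i) the determinant for `U = I₄` (variables: x = X 0, y = X 1, w = X 2, z = X 3)
    ((BPoly Gs (1 : Matrix (Fin 4) (Fin 4) ℝ)).det =
      MvPolynomial.X 2 ^ 2 * MvPolynomial.X 0 ^ 2 * MvPolynomial.X 1 ^ 2 +
        2 * MvPolynomial.X 2 * MvPolynomial.X 0 ^ 2 * MvPolynomial.X 1 ^ 2 +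
        MvPolynomial.X 0 ^ 4 * MvPolynomial.X 1 ^ 2 +
        MvPolynomial.X 0 ^ 2 * MvPolynomial.X 1 ^ 4 +
        MvPolynomial.X 0 ^ 2 * MvPolynomial.X 1 ^ 2 * MvPolynomial.X 3 ^ 2 +
        2 * MvPolynomial.X 0 ^ 2 * MvPolynomial.X 1 ^ 2 * MvPolynomial.X 3 +
        2 * MvPolynomial.X 0 ^ 2 * MvPolynomial.X 1 ^ 2) ∧
    (MvPolynomial.homogeneousComponent 4 ((BPoly Gs (1 : Matrix (Fin 4) (Fin 4) ℝ)).det) =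
      2 * MvPolynomial.X 0 ^ 2 * MvPolynomial.X 1 ^ 2) ∧
    (∀ d < 4, MvPolynomial.homogeneousComponent d
      ((BPoly Gs (1 : Matrix (Fin 4) (Fin 4) ℝ)).det) = 0) ∧
    mkU Gs (1 : Matrix (Fin 4) (Fin 4) ℝ) 3 = 4 ∧ mkmin Gs 3 = 4 ∧
    -- (ii) for the given `U`, the lowest-degree component has degree 6
    (∀ d ≤ 5, MvPolynomial.homogeneousComponent d ((BPoly Gs U).det) = 0) ∧
    MvPolynomial.homogeneousComponent 6 ((BPoly Gs U).det) ≠ 0 ∧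
    mkU Gs U 3 = 6 := by
  subst hgdef
  subst hθbar
  subst hUdef
  have hGm : Gs = S14.Gm := by rw [hGs]; exact S14.jac_eq
  subst hGm
  refine ⟨S14.detI_eq, ?_, ?_, S14.mkU_one, ?_, ?_, ?_, S14.mkU_U⟩
  · rw [S14.detI_eq]
    simp only [map_add, S14.hc_of_hom S14.homt1, S14.hc_of_hom S14.homt2,
      S14.hc_of_hom S14.homt3, S14.hc_of_hom S14.homt4, S14.hc_of_hom S14.homt5,
      S14.hc_of_hom S14.homt6, S14.hc_of_hom S14.homt7]
    norm_num
  · intro d hd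
    rw [S14.detI_eq]
    interval_cases d <;>
      (simp only [map_add, S14.hc_of_hom S14.homt1, S14.hc_of_hom S14.homt2,
        S14.hc_of_hom S14.homt3, S14.hc_of_hom S14.homt4, S14.hc_of_hom S14.homt5,
        S14.hc_of_hom S14.homt6, S14.hc_of_hom S14.homt7] <;> norm_num)
  · unfold mkmin
    apply S14.sInf_eq_of
    · exact ⟨1, ⟨Matrix.isSymm_one, Matrix.PosDef.one⟩, S14.mkU_one⟩
    · rintro v ⟨Q, ⟨hsy, hpd⟩, rfl⟩
      obtain ⟨R, hR⟩ := S14.fact Q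
      have hne := S14.detBne Q hsy hpd
      have hSne : {d | MvPolynomial.homogeneousComponent d (acoeff S14.Gm Q 3) ≠ 0}.Nonempty := by
        by_contra hempty
        rw [Set.not_nonempty_iff_eq_empty] at hempty
        apply hne
        have hz : acoeff S14.Gm Q 3 = 0 := by
          rw [← MvPolynomial.sum_homogeneousComponent (acoeff S14.Gm Q 3)]
          apply Finset.sum_eq_zero
          intro i _
          by_contra hne2
          exact (Set.eq_empty_iff_forall_notMem.mp hempty i) hne2
        rw [S14.acoeff_eq] at hz
        exact neg_eq_zero.mp hz
      show 4 ≤ mkU S14.Gm Q 3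
      show 4 ≤ sInf {d | MvPolynomial.homogeneousComponent d (acoeff S14.Gm Q 3) ≠ 0}
      by_contra hlt
      push_neg at hlt
      have hmem := Nat.sInf_mem hSne
      have hend : ∀ d, d < 4 → MvPolynomial.homogeneousComponent d (acoeff S14.Gm Q 3) = 0 := by
        intro d hd
        rw [S14.acoeff_eq, hR, map_neg, S14.low4 R hd, neg_zero]
      exact hmem (hend _ hlt)
  · intro d hd
    rw [S14.detU_eq, S14.hc_of_hom S14.homQp2, if_neg (by omega)]
  · rw [S14.detU_eq, S14.hc_of_hom S14.homQp2, if_pos rfl]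
    exact pow_ne_zero 2 S14.Qp_ne
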